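/- Assume λ > 0. For every t ∈ [0,T], ∫_t^T (Λ(t)/η)·(ω(t,T)/ω(s,T)) ds = 1 − c/(c·cosh(c(T−t)) + (λ/η)·sinh(c(T−t))). (This is the deterministic identity which shows that when the price process is a martingale, the price-dependent part of the optimal trading rate equals −(S_t/(2η))·c/(c·cosh(c(T−t)) + (λ/η)·sinh(c(T−t))).) -/

import Mathlib

open Real

/-!
Write `μ = λ/η`, `N(s) = c sinh(c(T−s)) + μ cosh(c(T−s))` and
`D(s) = μ sinh(c(T−s)) + c cosh(c(T−s))`.
Then `Λ(t)/η = c N(t)/D(t)` and `ω(t,T)/ω(s,T) = N(s)/N(t)`, so the integrand is `c N(s)/D(t)`.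
Since `D' = −c N` and `D(T) = c`, the integral is `(D(t) − c)/D(t) = 1 − c/D(t)`.
-/

lemma mul_sinh_add_mul_cosh_pos {a b x : ℝ} (ha : 0 ≤ a) (hb : 0 < b) (hx : 0 ≤ x) :
    0 < a * sinh x + b * cosh x :=
  add_pos_of_nonneg_of_pos (mul_nonneg ha (sinh_nonneg_iff.mpr hx)) (mul_pos hb (cosh_pos x))

lemma hasDerivAt_mul_sinh_add_mul_cosh (a b c T s : ℝ) :
    HasDerivAt (fun s => a * sinh (c * (T - s)) + b * cosh (c * (T - s)))
      (-c * (a * cosh (c * (T - s)) + b * sinh (c * (T - s)))) s := by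
  have hinner : HasDerivAt (fun s : ℝ => c * (T - s)) (-c) s := by
    simpa using ((hasDerivAt_id s).const_sub T).const_mul c
  refine ((hinner.sinh.const_mul a).add (hinner.cosh.const_mul b)).congr_deriv ?_
  ring

lemma integral_mul_sinh_add_mul_cosh (a b c T t : ℝ) (hc : c ≠ 0) :
    ∫ s in t..T, (a * sinh (c * (T - s)) + b * cosh (c * (T - s))) =
      (a * cosh (c * (T - t)) + b * sinh (c * (T - t)) - a) / c := by
  have hderiv : ∀ s ∈ Set.uIcc t T,
      HasDerivAt (fun s => -(b * sinh (c * (T - s)) + a * cosh (c * (T - s))) / c)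
        (a * sinh (c * (T - s)) + b * cosh (c * (T - s))) s := fun s _ => by
    refine ((hasDerivAt_mul_sinh_add_mul_cosh b a c T s).neg.div_const c).congr_deriv ?_
    field_simp
    ring
  have hcont : Continuous fun s => a * sinh (c * (T - s)) + b * cosh (c * (T - s)) := by
    fun_prop
  rw [intervalIntegral.integral_eq_sub_of_hasDerivAt hderiv (hcont.intervalIntegrable t T)]
  simp only [sub_self, mul_zero, cosh_zero, sinh_zero]
  ring

theorem stmt_4_general (T η q lam : ℝ) (hη : 0 < η) (hq : 0 < q) (hlam : 0 < lam)
    (c : ℝ) (hc : c = Real.sqrt (q / η))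
    (Lam : ℝ → ℝ)
    (hLam : ∀ t, Lam t =
      η * c * (c * Real.sinh (c * (T - t)) + (lam / η) * Real.cosh (c * (T - t))) /
        ((lam / η) * Real.sinh (c * (T - t)) + c * Real.cosh (c * (T - t))))
    (ω : ℝ → ℝ)
    (hω : ∀ t, ω t =
      (lam / η) / (c * Real.sinh (c * (T - t)) + (lam / η) * Real.cosh (c * (T - t)))) :
    ∀ t ∈ Set.Icc (0 : ℝ) T,
      (∫ s in t..T, (Lam t / η) * (ω t / ω s)) =
        1 - c / (c * Real.cosh (c * (T - t)) + (lam / η) * Real.sinh (c * (T - t))) := by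
  rintro t ⟨-, htT⟩
  have hc0 : 0 < c := hc ▸ sqrt_pos.mpr (div_pos hq hη)
  set μ := lam / η
  have hμ : 0 < μ := div_pos hlam hη
  have hN : ∀ s ≤ T, 0 < c * sinh (c * (T - s)) + μ * cosh (c * (T - s)) := fun s hs =>
    mul_sinh_add_mul_cosh_pos hc0.le hμ (mul_nonneg hc0.le (sub_nonneg.mpr hs))
  have hD : 0 < μ * sinh (c * (T - t)) + c * cosh (c * (T - t)) :=
    mul_sinh_add_mul_cosh_pos hμ.le hc0 (mul_nonneg hc0.le (sub_nonneg.mpr htT))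
  have hintegrand : Set.EqOn (fun s => (Lam t / η) * (ω t / ω s))
      (fun s => c / (μ * sinh (c * (T - t)) + c * cosh (c * (T - t))) *
        (c * sinh (c * (T - s)) + μ * cosh (c * (T - s)))) (Set.uIcc t T) := by
    intro s hs
    have hNs := hN s (Set.uIcc_of_le htT ▸ hs).2
    have hNt := hN t htT
    simp only [hLam, hω]
    field_simp
  rw [intervalIntegral.integral_congr hintegrand, intervalIntegral.integral_const_mul,
    integral_mul_sinh_add_mul_cosh c μ c T t hc0.ne']
  field_simp
  ring

/-- The identity ∫_t^T (Λ(t)/η)·(ω(t,T)/ω(s,T)) ds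
 = 1 − c/(c·cosh(c(T−t)) + (λ/η)·sinh(c(T−t))) of Section 4.1 (case λ > 0). -/
theorem stmt_4 (T η q lam : ℝ) (hT : 0 < T) (hη : 0 < η) (hq : 0 < q) (hlam : 0 < lam)
    (c : ℝ) (hc : c = Real.sqrt (q / η))
    (Lam : ℝ → ℝ)
    (hLam : ∀ t, Lam t =
      η * c * (c * Real.sinh (c * (T - t)) + (lam / η) * Real.cosh (c * (T - t))) /
        ((lam / η) * Real.sinh (c * (T - t)) + c * Real.cosh (c * (T - t))))
    (ω : ℝ → ℝ)
    (hω : ∀ t, ω t =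
      (lam / η) / (c * Real.sinh (c * (T - t)) + (lam / η) * Real.cosh (c * (T - t)))) :
    ∀ t ∈ Set.Icc (0 : ℝ) T,
      (∫ s in t..T, (Lam t / η) * (ω t / ω s)) =
        1 - c / (c * Real.cosh (c * (T - t)) + (lam / η) * Real.sinh (c * (T - t))) :=
  stmt_4_general T η q lam hη hq hlam c hc Lam hLam ω hω
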